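/- arXiv:1211.3186 — 2 statements merged into one kernel-verified Lean document; each statement's English description precedes it below -/
import Mathlib

section
/- Equivalence of the dominance orders in the stable sector (Proposition B.6). Let λ, μ, ω, η be partitions with |λ| + |μ| = |ω| + |η| = n and let m be an integer with m ≥ n. Set Λ* = (λ + δ^m) ∪ μ, Λ⊛ = (λ + δ^{m+1}) ∪ μ, Ω* = (ω + δ^m) ∪ η, Ω⊛ = (ω + δ^{m+1}) ∪ η. Then the following are equivalent: (i) for every i ≥ 1, λ_1 + ⋯ + λ_i ≥ ω_1 + ⋯ + ω_i, and for every j ≥ 1, |λ| + μ_1 + ⋯ + μ_j ≥ |ω| + η_1 + ⋯ + η_j; (ii) Λ* ≥ Ω* and Λ⊛ ≥ Ω⊛ in the dominance order on partitions. -/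
noncomputable section

namespace DoubleMacdonald

/-- A partition, encoded as a weakly decreasing function `ℕ → ℕ` (0-indexed: `f 0 = λ₁`)
with finitely many nonzero values. -/
def IsPartition (f : ℕ → ℕ) : Prop :=
  (∀ ⦃i j : ℕ⦄, i ≤ j → f j ≤ f i) ∧ ∃ N, ∀ i, N ≤ i → f i = 0

/-- The size `|λ| = Σᵢ λᵢ` of a partition. -/
def psize (f : ℕ → ℕ) : ℕ := ∑ᶠ i, f i

/-- The number `ℓ(λ)` of nonzero parts of a partition. -/
def plen (f : ℕ → ℕ) : ℕ := Nat.card {i : ℕ | 1 ≤ f i}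

/-- The conjugate partition: `λ'ⱼ = #{i : λᵢ ≥ j}` (0-indexed: `conj f j = λ'_{j+1}`). -/
def conj (f : ℕ → ℕ) : ℕ → ℕ := fun j => Nat.card {i : ℕ | j + 1 ≤ f i}

/-- The staircase partition `δ^m = (m-1, m-2, …, 1, 0)`. -/
def delta (m : ℕ) : ℕ → ℕ := fun i => m - 1 - i

/-- Componentwise sum of partitions. -/
def addF (f g : ℕ → ℕ) : ℕ → ℕ := fun i => f i + g i

/-- Union `λ ∪ μ` of partitions: the weakly decreasing rearrangement of the combined
multiset of parts, defined via `(λ ∪ μ)' = λ' + μ'`. -/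
def unionF (f g : ℕ → ℕ) : ℕ → ℕ := conj (addF (conj f) (conj g))

/-- Partial sum `λ₁ + ⋯ + λ_k`. -/
def psum (f : ℕ → ℕ) (k : ℕ) : ℕ := ∑ i ∈ Finset.range k, f i

/-- The statistic `n(λ) = Σᵢ (i-1) λᵢ`. -/
def nstat (f : ℕ → ℕ) : ℕ := ∑ᶠ i, i * f i

/-- The (extended) dominance order: `f ⪰ g` iff all partial sums of `f` dominate those of `g`. -/
def Dominates (f g : ℕ → ℕ) : Prop := ∀ k, psum g k ≤ psum f k

/-!
Through conjugates, the sum of the `k` largest parts of a union `f ∪ g` is the maximum of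
`f₁ + ⋯ + f_a + g₁ + ⋯ + g_b` over `a + b = k`. Once `M ≥ |λ| + |μ|`, the staircase `δ^M`
dominates every comparison: each split of `Ω*` is beaten by a split of `Λ*`, where the staircase
parts pushed onto the `λ` side outweigh the lost parts of `μ`. Conversely, at `k = M - μ_j + j`
the `k` largest parts of `δ^M ∪ μ` are the first `M - μ_j` parts of `δ^M` and `μ₁, …, μ_j`,
which extracts the second family of inequalities from `Λ⊛ ≥ Ω⊛`; at `k = i` all of `μ` is
absorbed by the staircase, which extracts the first.
-/

open Finset

@[simp]
lemma psum_zero (f : ℕ → ℕ) : psum f 0 = 0 := rfl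

lemma psum_succ (f : ℕ → ℕ) (k : ℕ) : psum f (k + 1) = psum f k + f k :=
  sum_range_succ f k

lemma psum_mono (f : ℕ → ℕ) : Monotone (psum f) := fun _ _ h =>
  sum_le_sum_of_subset (range_subset_range.2 h)

lemma psum_addF (f g : ℕ → ℕ) (k : ℕ) : psum (addF f g) k = psum f k + psum g k :=
  sum_add_distrib

lemma psum_le_psum_add_mul {f : ℕ → ℕ} {a b c v : ℕ} (hc : a + b = c)
    (hv : ∀ t, a ≤ t → t < c → f t ≤ v) : psum f c ≤ psum f a + b * v := by
  subst hc
  rw [psum, psum, sum_range_add]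
  gcongr
  simpa using sum_le_card_nsmul (range b) (fun t => f (a + t)) v
    fun t ht => hv _ (by omega) (by simp at ht; omega)

lemma psum_add_mul_le_psum {f : ℕ → ℕ} {a b c v : ℕ} (hc : a + b = c)
    (hv : ∀ t, a ≤ t → t < c → v ≤ f t) : psum f a + b * v ≤ psum f c := by
  subst hc
  rw [psum, psum, sum_range_add]
  gcongr
  simpa using card_nsmul_le_sum (range b) (fun t => f (a + t)) v
    fun t ht => hv _ (by omega) (by simp at ht; omega)

lemma psum_delta_add_mul_le (M : ℕ) {a b c : ℕ} (hc : a + b = c) :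
    psum (delta M) a + b * (M - c) ≤ psum (delta M) c :=
  psum_add_mul_le_psum hc fun t _ ht => by simp only [delta]; omega

lemma psum_add_psum_le_of_threshold {f g : ℕ → ℕ} {a j v a' b' : ℕ} (hab : a' + b' = a + j)
    (hf₁ : ∀ t < a, v ≤ f t) (hf₂ : ∀ t, a ≤ t → f t ≤ v)
    (hg₁ : ∀ t < j, v ≤ g t) (hg₂ : ∀ t, j ≤ t → g t ≤ v) :
    psum f a' + psum g b' ≤ psum f a + psum g j := by
  wlog h : a' ≤ a generalizing f g a j a' b'
  · have := this (a' := b') (b' := a') (by omega) hg₁ hg₂ hf₁ hf₂ (by omega)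
    omega
  have hg := psum_le_psum_add_mul (f := g) (a := j) (b := a - a') (c := b') (v := v) (by omega)
    fun t ht _ => hg₂ t ht
  have hf := psum_add_mul_le_psum (f := f) (a := a') (b := a - a') (c := a) (v := v) (by omega)
    fun t _ ht => hf₁ t ht
  omega

lemma psize_eq_psum {f : ℕ → ℕ} {N : ℕ} (hN : ∀ i, N ≤ i → f i = 0) : psize f = psum f N :=
  finsum_eq_sum_of_support_subset f fun i hi => by
    by_contra h
    exact hi (hN i (by simpa using h))

lemma isPartition_delta (M : ℕ) : IsPartition (delta M) :=
  ⟨fun i j h => by simp only [delta]; omega, M, fun i hi => by simp only [delta]; omega⟩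

lemma card_filter_range_lt (a c : ℕ) : #{i ∈ range a | i < c} = min a c := by
  rw [show {i ∈ range a | i < c} = range (min a c) by ext; simp, card_range]

lemma conj_eq_card_filter {H : ℕ → ℕ} {N : ℕ} (hN : ∀ j, N ≤ j → H j = 0) (i : ℕ) :
    conj H i = #{j ∈ range N | i < H j} := by
  have : {j | i + 1 ≤ H j} = ↑{j ∈ range N | i < H j} := by
    ext j
    simp only [Set.mem_ofPred_eq, coe_filter, mem_range]
    exact ⟨fun h => ⟨by by_contra hj; have := hN j (by omega); omega, h⟩, fun h => h.2⟩
  rw [conj, this, Nat.card_coe_set_eq, Set.ncard_coe_finset]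

lemma psum_conj_eq_sum_min {H : ℕ → ℕ} {N : ℕ} (hN : ∀ j, N ≤ j → H j = 0) (k : ℕ) :
    psum (conj H) k = ∑ j ∈ range N, min k (H j) := by
  calc psum (conj H) k = ∑ i ∈ range k, #{j ∈ range N | i < H j} :=
        sum_congr rfl fun i _ => conj_eq_card_filter hN i
    _ = ∑ j ∈ range N, #{i ∈ range k | i < H j} :=
        sum_card_bipartiteAbove_eq_sum_card_bipartiteBelow fun i j => i < H j
    _ = ∑ j ∈ range N, min k (H j) := by simp only [card_filter_range_lt]

/-- Split `k` at `a`, where `j₀` is the first index with `F j₀ + G j₀ ≤ k`: below `j₀` both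
minima on the right are attained at `a` and `k - a`, from `j₀` on at `F j` and `G j`. -/
lemma exists_min_add_le_min_add_min {F G : ℕ → ℕ} (hF : Antitone F) (hG : Antitone G) {k : ℕ}
    (h : ∃ j, F j + G j ≤ k) :
    ∃ a ≤ k, ∀ j, min k (F j + G j) ≤ min a (F j) + min (k - a) (G j) := by
  classical
  set j₀ := Nat.find h
  have hj₀ : F j₀ + G j₀ ≤ k := Nat.find_spec h
  have hG₀ : G j₀ ≤ G (j₀ - 1) := hG (Nat.sub_le j₀ 1)
  refine ⟨max (F j₀) (k - G (j₀ - 1)), by omega, fun j => ?_⟩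
  rcases le_or_gt j₀ j with hj | hj
  · have := hF hj
    have := hG hj
    omega
  · have := Nat.find_min h (show j₀ - 1 < j₀ by omega)
    have := hF (show j ≤ j₀ - 1 by omega)
    have := hF hj.le
    have := hG (show j ≤ j₀ - 1 by omega)
    omega

namespace IsPartition

variable {f g : ℕ → ℕ}

lemma antitone (hf : IsPartition f) : Antitone f := hf.1

lemma addF (hf : IsPartition f) (hg : IsPartition g) : IsPartition (addF f g) := by
  obtain ⟨N, hN⟩ := hf.2
  obtain ⟨N', hN'⟩ := hg.2
  refine ⟨fun i j h => add_le_add (hf.antitone h) (hg.antitone h), max N N', fun i hi => ?_⟩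
  simp [DoubleMacdonald.addF, hN i (le_of_max_le_left hi), hN' i (le_of_max_le_right hi)]

lemma psum_le_psize (hf : IsPartition f) (k : ℕ) : psum f k ≤ psize f := by
  obtain ⟨N, hN⟩ := hf.2
  rw [psize_eq_psum fun i hi => hN i (le_of_max_le_left hi)]
  exact psum_mono f (le_max_right N k)

lemma le_psize (hf : IsPartition f) (t : ℕ) : f t ≤ psize f := by
  have := hf.psum_le_psize (t + 1)
  rw [psum_succ] at this
  omega

/-- Up to its length, a partition has parts `≥ 1`; beyond it, the partial sums are constant. -/
lemma min_le_psum (hf : IsPartition f) (k : ℕ) : min k (psize f) ≤ psum f k := by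
  by_cases hpos : ∀ t < k, 1 ≤ f t
  · have := psum_add_mul_le_psum (f := f) (a := 0) (v := 1) (zero_add k) fun t _ ht => hpos t ht
    simp only [psum_zero, mul_one, zero_add] at this
    exact min_le_of_left_le this
  · push Not at hpos
    obtain ⟨t, htk, ht⟩ := hpos
    rw [psize_eq_psum (N := t) fun i hi => by have := hf.antitone hi; omega]
    exact min_le_of_right_le (psum_mono f htk.le)

lemma psum_eq_psize (hf : IsPartition f) {k : ℕ} (hk : psize f ≤ k) : psum f k = psize f :=
  le_antisymm (hf.psum_le_psize k) (by simpa [hk] using hf.min_le_psum k)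

lemma lt_conj_iff (hf : IsPartition f) {i j : ℕ} : i < conj f j ↔ j < f i := by
  obtain ⟨N, hN⟩ := hf.2
  have hex : ∃ i, f i ≤ j := ⟨N, by simp [hN N le_rfl]⟩
  have : {i | j + 1 ≤ f i} = Set.Iio (Nat.find hex) := by
    ext i
    simp only [Set.mem_ofPred_eq, Set.mem_Iio, Nat.lt_find_iff, not_le]
    exact ⟨fun h m hm => Nat.lt_of_lt_of_le h (hf.antitone hm), fun h => h i le_rfl⟩
  rw [conj, this, Nat.card_coe_set_eq, Set.ncard_Iio_nat]
  exact (Set.ext_iff.1 this i).symm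

lemma conj_antitone (hf : IsPartition f) : Antitone (conj f) := fun _ _ h =>
  le_of_forall_lt fun _ hi => hf.lt_conj_iff.2 (h.trans_lt (hf.lt_conj_iff.1 hi))

lemma conj_eq_zero (hf : IsPartition f) {j : ℕ} (hj : f 0 ≤ j) : conj f j = 0 :=
  Nat.eq_zero_of_not_pos fun h => (hf.lt_conj_iff.1 h).not_ge hj

lemma psum_eq_sum_min_conj (hf : IsPartition f) {N : ℕ} (hN : f 0 ≤ N) (a : ℕ) :
    psum f a = ∑ j ∈ range N, min a (conj f j) := by
  calc psum f a = ∑ i ∈ range a, #{j ∈ range N | j < f i} :=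
        sum_congr rfl fun i _ => by
          rw [card_filter_range_lt, min_eq_right ((hf.antitone (Nat.zero_le i)).trans hN)]
    _ = ∑ j ∈ range N, #{i ∈ range a | j < f i} :=
        sum_card_bipartiteAbove_eq_sum_card_bipartiteBelow fun i j => j < f i
    _ = ∑ j ∈ range N, min a (conj f j) := by
        simp only [← hf.lt_conj_iff, card_filter_range_lt]

lemma psum_unionF_eq_sum_min (hf : IsPartition f) (hg : IsPartition g) {N : ℕ}
    (hNf : f 0 ≤ N) (hNg : g 0 ≤ N) (k : ℕ) :
    psum (unionF f g) k = ∑ j ∈ range N, min k (conj f j + conj g j) :=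
  psum_conj_eq_sum_min (fun j hj => by
    simp [DoubleMacdonald.addF, hf.conj_eq_zero (hNf.trans hj), hg.conj_eq_zero (hNg.trans hj)]) k

lemma psum_add_psum_le_psum_unionF (hf : IsPartition f) (hg : IsPartition g) (a b : ℕ) :
    psum f a + psum g b ≤ psum (unionF f g) (a + b) := by
  rw [hf.psum_eq_sum_min_conj (le_max_left (f 0) (g 0)) a,
    hg.psum_eq_sum_min_conj (le_max_right (f 0) (g 0)) b,
    psum_unionF_eq_sum_min hf hg (le_max_left _ _) (le_max_right _ _), ← sum_add_distrib]
  exact sum_le_sum fun j _ => by omega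

lemma exists_psum_unionF_le (hf : IsPartition f) (hg : IsPartition g) (k : ℕ) :
    ∃ a b, a + b = k ∧ psum (unionF f g) k ≤ psum f a + psum g b := by
  have hex : ∃ j, conj f j + conj g j ≤ k := ⟨max (f 0) (g 0), by
    rw [hf.conj_eq_zero (le_max_left _ _), hg.conj_eq_zero (le_max_right _ _)]; omega⟩
  obtain ⟨a, hak, ha⟩ := exists_min_add_le_min_add_min hf.conj_antitone hg.conj_antitone hex
  refine ⟨a, k - a, by omega, ?_⟩
  rw [hf.psum_eq_sum_min_conj (le_max_left (f 0) (g 0)) a,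
    hg.psum_eq_sum_min_conj (le_max_right (f 0) (g 0)) (k - a),
    psum_unionF_eq_sum_min hf hg (le_max_left _ _) (le_max_right _ _), ← sum_add_distrib]
  exact sum_le_sum fun j _ => ha j

end IsPartition

section Stable

variable {lam mu om eta : ℕ → ℕ} {M : ℕ}

/-- Every split `(a, b)` of `ω + δ^M, η` is beaten by the split `(a, b)`, `(a + b, 0)` or
`(|λ|, a + b - |λ|)` of `λ + δ^M, μ`; in the last two the staircase parts gained on the `λ` side
outweigh the `μ` parts lost, since `M ≥ |λ| + |μ|`. -/
lemma exists_split_le_of_stable (hlam : IsPartition lam) (hmu : IsPartition mu)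
    (hom : IsPartition om) (hM : psize lam + psize mu ≤ M)
    (h₁ : ∀ i, 1 ≤ i → psum om i ≤ psum lam i)
    (h₂ : ∀ j, 1 ≤ j → psize om + psum eta j ≤ psize lam + psum mu j) (a b : ℕ) :
    ∃ a' b', a' + b' = a + b ∧
      psum om a + psum (delta M) a + psum eta b ≤ psum lam a' + psum (delta M) a' + psum mu b' := by
  have hωa := hom.psum_le_psize a
  rcases Nat.eq_zero_or_pos b with rfl | hb
  · refine ⟨a, 0, rfl, ?_⟩
    rcases Nat.eq_zero_or_pos a with rfl | ha
    · simp
    · have := h₁ a ha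
      simp only [psum_zero]
      omega
  have hμb := hmu.psum_le_psize b
  have hb₂ := h₂ b hb
  rcases le_or_gt (psize lam) a with hsa | has
  · refine ⟨a, b, rfl, ?_⟩
    have := hlam.psum_eq_psize hsa
    omega
  rcases le_or_gt (a + b) (psize lam) with habs | hsab
  · refine ⟨a + b, 0, rfl, ?_⟩
    have hlamk := hlam.min_le_psum (a + b)
    have hδ := psum_delta_add_mul_le M (rfl : a + b = a + b)
    have : M - (a + b) ≤ b * (M - (a + b)) := Nat.le_mul_of_pos_left _ hb
    simp only [psum_zero]
    omega
  · set s := psize lam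
    refine ⟨s, a + b - s, by omega, ?_⟩
    have hlamk : psum lam s = s := hlam.psum_eq_psize le_rfl
    have hδ := psum_delta_add_mul_le M (show a + (s - a) = s by omega)
    have hμ := psum_le_psum_add_mul (f := mu) (a := a + b - s) (b := s - a) (c := b)
      (v := psize mu) (by omega) fun t _ _ => hmu.le_psize t
    have : (s - a) * psize mu ≤ (s - a) * (M - s) := Nat.mul_le_mul_left _ (by omega)
    omega

lemma dominates_unionF_delta (hlam : IsPartition lam) (hmu : IsPartition mu)
    (hom : IsPartition om) (heta : IsPartition eta) (hM : psize lam + psize mu ≤ M)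
    (h₁ : ∀ i, 1 ≤ i → psum om i ≤ psum lam i)
    (h₂ : ∀ j, 1 ≤ j → psize om + psum eta j ≤ psize lam + psum mu j) :
    Dominates (unionF (addF lam (delta M)) mu) (unionF (addF om (delta M)) eta) := by
  intro k
  obtain ⟨a, b, rfl, hΩ⟩ := (hom.addF (isPartition_delta M)).exists_psum_unionF_le heta k
  obtain ⟨a', b', hab, hsplit⟩ := exists_split_le_of_stable hlam hmu hom hM h₁ h₂ a b
  have hΛ := (hlam.addF (isPartition_delta M)).psum_add_psum_le_psum_unionF hmu a' b'
  rw [psum_addF, hab] at hΛ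
  rw [psum_addF] at hΩ
  omega

/-- Compare the partial sums at `k = a + j` with `a = M - μ_j`: the `k` largest parts of
`δ^M ∪ μ` are the first `a` parts of `δ^M` and the first `j` parts of `μ`. -/
lemma psize_add_psum_le_of_dominates_unionF_delta (hlam : IsPartition lam)
    (hmu : IsPartition mu) (hom : IsPartition om) (heta : IsPartition eta)
    (hM : psize lam + psize mu < M)
    (hdom : Dominates (unionF (addF lam (delta M)) mu) (unionF (addF om (delta M)) eta)) (j : ℕ) :
    psize om + psum eta j ≤ psize lam + psum mu j := by
  have hμj : psum mu j + mu j ≤ psize mu := psum_succ mu j ▸ hmu.psum_le_psize (j + 1)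
  set a := M - mu j
  obtain ⟨a', b', hab, hΛ⟩ := (hlam.addF (isPartition_delta M)).exists_psum_unionF_le hmu (a + j)
  have hΩ := (hom.addF (isPartition_delta M)).psum_add_psum_le_psum_unionF heta a j
  have hexch : psum (delta M) a' + psum mu b' ≤ psum (delta M) a + psum mu j :=
    psum_add_psum_le_of_threshold hab (fun t ht => by simp only [delta]; omega)
      (fun t ht => by simp only [delta]; omega) (fun t ht => hmu.antitone ht.le)
      (fun t ht => hmu.antitone ht)
  have hlamk := hlam.psum_le_psize a'
  have hω := hom.min_le_psum a
  have := hdom (a + j)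
  rw [psum_addF] at hΩ hΛ
  omega

lemma psum_le_psum_of_dominates_unionF_delta (hlam : IsPartition lam) (hmu : IsPartition mu)
    (hom : IsPartition om) (heta : IsPartition eta) (hM : psize lam + psize mu < M)
    (hdom : Dominates (unionF (addF lam (delta M)) mu) (unionF (addF om (delta M)) eta))
    (hsize : psize om ≤ psize lam) (i : ℕ) : psum om i ≤ psum lam i := by
  rcases le_or_gt (psize lam) i with hi | hi
  · rw [hlam.psum_eq_psize hi]
    exact (hom.psum_le_psize i).trans hsize
  obtain ⟨a', b', hab, hΛ⟩ := (hlam.addF (isPartition_delta M)).exists_psum_unionF_le hmu i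
  have hΩ := (hom.addF (isPartition_delta M)).psum_add_psum_le_psum_unionF heta i 0
  have hlamk := psum_mono lam (show a' ≤ i by omega)
  -- the staircase parts `M - 1 - t ≥ |μ|` for `t < i` absorb all of `μ`
  have hμ := psum_le_psum_add_mul (f := mu) (a := 0) (c := b') (v := psize mu) (zero_add b')
    fun t _ _ => hmu.le_psize t
  have hδ := psum_delta_add_mul_le M hab
  have : b' * psize mu ≤ b' * (M - i) := Nat.mul_le_mul_left _ (by omega)
  have := hdom i
  rw [psum_addF] at hΩ hΛ
  simp only [psum_zero, add_zero, zero_add] at hΩ hμ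
  omega

end Stable

theorem dominance_orders_equiv_stable_general (lam mu om eta : ℕ → ℕ)
    (hlam : IsPartition lam) (hmu : IsPartition mu)
    (hom : IsPartition om) (heta : IsPartition eta)
    (n m : ℕ)
    (hlm : psize lam + psize mu = n)
    (hm : n ≤ m) :
    ((∀ i, 1 ≤ i → psum om i ≤ psum lam i) ∧
        (∀ j, 1 ≤ j → psize om + psum eta j ≤ psize lam + psum mu j)) ↔
      (Dominates (unionF (addF lam (delta m)) mu) (unionF (addF om (delta m)) eta) ∧
        Dominates (unionF (addF lam (delta (m+1))) mu) (unionF (addF om (delta (m+1))) eta)) := by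
  constructor
  · rintro ⟨h₁, h₂⟩
    exact ⟨dominates_unionF_delta hlam hmu hom heta (by omega) h₁ h₂,
      dominates_unionF_delta hlam hmu hom heta (by omega) h₁ h₂⟩
  · rintro ⟨-, hdom⟩
    have hM : psize lam + psize mu < m + 1 := by omega
    have h₂ := psize_add_psum_le_of_dominates_unionF_delta hlam hmu hom heta hM hdom
    have h₁ := psum_le_psum_of_dominates_unionF_delta hlam hmu hom heta hM hdom
      (by simpa using h₂ 0)
    exact ⟨fun i _ => h₁ i, fun j _ => h₂ j⟩

/-- **Equivalence of the dominance orders in the stable sector** (Proposition B.6).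
Let `λ, μ, ω, η` be partitions with `|λ| + |μ| = |ω| + |η| = n` and `m ≥ n`.  Set
`Λ* = (λ + δ^m) ∪ μ`, `Λ⊛ = (λ + δ^{m+1}) ∪ μ`, `Ω* = (ω + δ^m) ∪ η`,
`Ω⊛ = (ω + δ^{m+1}) ∪ η`.  Then the dominance conditions
`λ₁ + ⋯ + λᵢ ≥ ω₁ + ⋯ + ωᵢ` (all `i ≥ 1`) and
`|λ| + μ₁ + ⋯ + μⱼ ≥ |ω| + η₁ + ⋯ + ηⱼ` (all `j ≥ 1`) hold
iff `Λ* ≥ Ω*` and `Λ⊛ ≥ Ω⊛` in the dominance order on partitions. -/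
theorem dominance_orders_equiv_stable (lam mu om eta : ℕ → ℕ)
    (hlam : IsPartition lam) (hmu : IsPartition mu)
    (hom : IsPartition om) (heta : IsPartition eta)
    (n m : ℕ)
    (hlm : psize lam + psize mu = n) (hoe : psize om + psize eta = n)
    (hm : n ≤ m) :
    ((∀ i, 1 ≤ i → psum om i ≤ psum lam i) ∧
        (∀ j, 1 ≤ j → psize om + psum eta j ≤ psize lam + psum mu j)) ↔
      (Dominates (unionF (addF lam (delta m)) mu) (unionF (addF om (delta m)) eta) ∧
        Dominates (unionF (addF lam (delta (m+1))) mu) (unionF (addF om (delta (m+1))) eta)) :=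
  dominance_orders_equiv_stable_general lam mu om eta hlam hmu hom heta n m hlm hm

end DoubleMacdonald
end
end

section
/- Depth sum of the skew diagram SΛ (equation (C.15) in the paper). Let λ and μ be partitions and let m be an integer with m ≥ |λ| + |μ|. Then n((λ + δ^{m+1}) ∪ μ) − n(δ^{m+1}) = n(λ) + n(μ) + m|μ| − n(μ'), where n(ν) = Σ_i (i−1) ν_i. -/
/-!
Count the cells of a Young diagram by rows and by columns: `n(ν) = Σⱼ Σ_{i < ν'ⱼ} i` and
`n(ν') = Σᵢ Σ_{j < νᵢ} j`. Since `(α ∪ μ)' = α' + μ'`, this gives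
`n(α ∪ μ) = n(α) + n(μ) + Σⱼ α'ⱼ μ'ⱼ`. For `α = λ + δ^{m+1}` the bound `m ≥ |λ| + |μ|` forces
`α'ⱼ = m - j` (0-indexed) in every column `j < μ₁`, so the cross term is
`Σⱼ (m - j) μ'ⱼ = m|μ| - n(μ')`; finally `n` is additive, so `n(λ + δ^{m+1}) = n(λ) + n(δ^{m+1})`.
-/

noncomputable section

namespace DoubleMacdonald

open Finset

variable {f g : ℕ → ℕ} {N M : ℕ}

theorem finsum_eq_sum_range_of_eq_zero {u : ℕ → ℕ} (hu : ∀ i, N ≤ i → u i = 0) :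
    ∑ᶠ i, u i = ∑ i ∈ range N, u i :=
  finsum_eq_sum_of_support_subset u fun i hi => by
    rw [coe_range, Set.mem_Iio]
    by_contra h
    exact hi (hu i (not_lt.mp h))

theorem psize_eq_sum_range (hN : ∀ i, N ≤ i → f i = 0) : psize f = ∑ i ∈ range N, f i :=
  finsum_eq_sum_range_of_eq_zero hN

theorem nstat_eq_sum_range (hN : ∀ i, N ≤ i → f i = 0) :
    nstat f = ∑ i ∈ range N, i * f i :=
  finsum_eq_sum_range_of_eq_zero fun i hi => by rw [hN i hi, mul_zero]

theorem le_psize (hN : ∀ i, N ≤ i → f i = 0) (k : ℕ) : f k ≤ psize f :=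
  single_le_finsum k ((Set.finite_Iio N).subset fun i hi => by
    by_contra h
    exact hi (hN i (not_lt.mp h))) fun _ => Nat.zero_le _

theorem lt_conj_iff (hf : Antitone f) (hN : ∀ i, N ≤ i → f i = 0) {i j : ℕ} :
    i < conj f j ↔ j < f i := by
  classical
  have hex : ∃ k, f k ≤ j := ⟨N, by simp [hN N le_rfl]⟩
  have hset : {i | j < f i} = Set.Iio (Nat.find hex) := by
    ext i
    simp only [Set.mem_ofPred_eq, Set.mem_Iio]
    constructor
    · intro h
      by_contra h'
      exact (hf (not_lt.mp h')).trans (Nat.find_spec hex) |>.not_gt h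
    · intro h
      exact lt_of_not_ge (Nat.find_min hex h)
  have hconj : conj f j = Nat.find hex := by
    change Nat.card {i | j < f i} = _
    rw [hset, Nat.card_coe_set_eq, Set.ncard_Iio_nat]
  rw [hconj, ← Set.mem_Iio, ← hset, Set.mem_ofPred_eq]

theorem conj_eq_zero (hf : Antitone f) (hN : ∀ i, N ≤ i → f i = 0) {j : ℕ} (hj : f 0 ≤ j) :
    conj f j = 0 :=
  Nat.eq_zero_of_not_pos fun h => not_lt.mpr hj ((lt_conj_iff hf hN).mp h)

theorem conj_antitone (hf : Antitone f) (hN : ∀ i, N ≤ i → f i = 0) : Antitone (conj f) :=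
  fun _ _ hjj' => le_of_forall_lt fun _ hi =>
    (lt_conj_iff hf hN).mpr (hjj'.trans_lt ((lt_conj_iff hf hN).mp hi))

theorem sum_sum_range_eq_sum_sum_range_conj {β : Type*} [AddCommMonoid β] (hf : Antitone f)
    (hN : ∀ i, N ≤ i → f i = 0) (hM : f 0 ≤ M) (w : ℕ → ℕ → β) :
    ∑ i ∈ range N, ∑ j ∈ range (f i), w i j = ∑ j ∈ range M, ∑ i ∈ range (conj f j), w i j :=
  sum_comm' fun i j => by
    simp only [mem_range, lt_conj_iff hf hN]
    constructor
    · rintro ⟨-, hj⟩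
      exact ⟨hj, hj.trans_le ((hf (Nat.zero_le i)).trans hM)⟩
    · rintro ⟨hj, -⟩
      refine ⟨?_, hj⟩
      by_contra h
      rw [hN i (not_lt.mp h)] at hj
      exact Nat.not_lt_zero j hj

theorem psize_conj (hf : Antitone f) (hN : ∀ i, N ≤ i → f i = 0) : psize (conj f) = psize f := by
  rw [psize_eq_sum_range fun _ => conj_eq_zero hf hN, psize_eq_sum_range hN]
  have := sum_sum_range_eq_sum_sum_range_conj hf hN le_rfl fun _ _ => 1
  simp only [sum_const, card_range, smul_eq_mul, mul_one] at this
  exact this.symm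

theorem lt_psize_of_ne_zero (hf : Antitone f) (hN : ∀ i, N ≤ i → f i = 0) {k : ℕ}
    (hk : f k ≠ 0) : k < psize f :=
  calc k < conj f 0 := (lt_conj_iff hf hN).mpr (Nat.pos_of_ne_zero hk)
    _ ≤ psize (conj f) := le_psize (fun _ => conj_eq_zero hf hN) 0
    _ = psize f := psize_conj hf hN

theorem eq_zero_of_psize_le (hf : Antitone f) (hN : ∀ i, N ≤ i → f i = 0) {k : ℕ}
    (hk : psize f ≤ k) : f k = 0 :=
  by_contra fun h => (lt_psize_of_ne_zero hf hN h).not_ge hk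

theorem nstat_eq_sum_sum_range_conj (hf : Antitone f) (hN : ∀ i, N ≤ i → f i = 0)
    (hM : f 0 ≤ M) : nstat f = ∑ j ∈ range M, ∑ i ∈ range (conj f j), i := by
  rw [nstat_eq_sum_range hN, ← sum_sum_range_eq_sum_sum_range_conj hf hN hM]
  simp [mul_comm]

theorem nstat_conj (hf : Antitone f) (hN : ∀ i, N ≤ i → f i = 0) :
    nstat (conj f) = ∑ i ∈ range N, ∑ j ∈ range (f i), j := by
  rw [nstat_eq_sum_range fun _ => conj_eq_zero hf hN,
    sum_sum_range_eq_sum_sum_range_conj hf hN le_rfl]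
  simp [mul_comm]

theorem sum_range_id_add (a b : ℕ) :
    ∑ i ∈ range (a + b), i = ∑ i ∈ range a, i + ∑ i ∈ range b, i + a * b := by
  rw [sum_range_add, sum_add_distrib, sum_const, card_range, smul_eq_mul]
  ring

theorem nstat_unionF (hf : Antitone f) (hNf : ∀ i, N ≤ i → f i = 0) (hg : Antitone g)
    (hNg : ∀ i, N ≤ i → g i = 0) (hfM : f 0 ≤ M) (hgM : g 0 ≤ M) :
    nstat (unionF f g) = nstat f + nstat g + ∑ j ∈ range M, conj f j * conj g j := by
  have hH : Antitone (addF (conj f) (conj g)) := (conj_antitone hf hNf).add (conj_antitone hg hNg)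
  have hHM : ∀ j, M ≤ j → addF (conj f) (conj g) j = 0 := fun j hj => by
    rw [addF, conj_eq_zero hf hNf (hfM.trans hj), conj_eq_zero hg hNg (hgM.trans hj)]
  rw [unionF, nstat_conj hH hHM, nstat_eq_sum_sum_range_conj hf hNf hfM,
    nstat_eq_sum_sum_range_conj hg hNg hgM, ← sum_add_distrib, ← sum_add_distrib]
  exact sum_congr rfl fun j _ => sum_range_id_add _ _

theorem nstat_addF (hNf : ∀ i, N ≤ i → f i = 0) (hNg : ∀ i, N ≤ i → g i = 0) :
    nstat (addF f g) = nstat f + nstat g := by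
  rw [nstat_eq_sum_range (N := N) fun i hi => by rw [addF, hNf i hi, hNg i hi],
    nstat_eq_sum_range hNf, nstat_eq_sum_range hNg, ← sum_add_distrib]
  simp only [addF, mul_add]

theorem delta_antitone (m : ℕ) : Antitone (delta m) :=
  fun _ _ hij => Nat.sub_le_sub_left hij _

theorem conj_addF_delta (hf : Antitone f) (hN : ∀ i, N ≤ i → f i = 0) {m i : ℕ}
    (hi : psize f + i < m) : conj (addF f (delta (m + 1))) i = m - i := by
  have hset : {k | i < f k + (m + 1 - 1 - k)} = Set.Iio (m - i) := by
    ext k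
    simp only [Set.mem_ofPred_eq, Set.mem_Iio]
    rcases eq_or_ne (f k) 0 with hk | hk
    · omega
    · have := lt_psize_of_ne_zero hf hN hk
      omega
  change Nat.card {k | i < f k + (m + 1 - 1 - k)} = _
  rw [hset, Nat.card_coe_set_eq, Set.ncard_Iio_nat]

theorem sum_mul_conj_add_nstat_conj (hg : Antitone g) (hN : ∀ i, N ≤ i → g i = 0)
    (hM : g 0 ≤ M) {h : ℕ → ℕ} {m : ℕ} (hh : ∀ i < g 0, h i + i = m) :
    ∑ i ∈ range M, h i * conj g i + nstat (conj g) = m * psize g := by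
  have hconjM : ∀ j, M ≤ j → conj g j = 0 := fun j hj => conj_eq_zero hg hN (hM.trans hj)
  rw [nstat_eq_sum_range hconjM, ← sum_add_distrib, ← psize_conj hg hN,
    psize_eq_sum_range hconjM, mul_sum]
  refine sum_congr rfl fun i _ => ?_
  rcases lt_or_ge i (g 0) with hi | hi
  · rw [← add_mul, hh i hi]
  · simp [conj_eq_zero hg hN hi]

/-- **Depth sum of the skew diagram `SΛ`** (equation (C.15)).
If `λ`, `μ` are partitions and `m ≥ |λ| + |μ|`, then
`n((λ + δ^{m+1}) ∪ μ) − n(δ^{m+1}) = n(λ) + n(μ) + m|μ| − n(μ')`. -/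
theorem skew_depth_sum (f g : ℕ → ℕ) (hf : IsPartition f) (hg : IsPartition g)
    (m : ℕ) (hm : psize f + psize g ≤ m) :
    (nstat (unionF (addF f (delta (m+1))) g) : ℤ) - (nstat (delta (m+1)) : ℤ) =
      (nstat f : ℤ) + (nstat g : ℤ) + (m : ℤ) * (psize g : ℤ) - (nstat (conj g) : ℤ) := by
  obtain ⟨hfa, Nf, hfN⟩ := hf
  obtain ⟨hga, Ng, hgN⟩ := hg
  have hfm : ∀ i, m ≤ i → f i = 0 := fun i hi => eq_zero_of_psize_le hfa hfN (by omega)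
  have hgm : ∀ i, m ≤ i → g i = 0 := fun i hi => eq_zero_of_psize_le hga hgN (by omega)
  have hδm : ∀ i, m ≤ i → delta (m + 1) i = 0 := fun i hi => by rw [delta]; omega
  set A := addF f (delta (m + 1))
  have hA : Antitone A := Antitone.add hfa (delta_antitone (m + 1))
  have hAm : ∀ i, m ≤ i → A i = 0 := fun i hi => by simp only [A, addF, hfm i hi, hδm i hi]
  have hg0 : g 0 ≤ A 0 := by
    have := le_psize hgN 0
    simp only [A, addF, delta]
    omega
  have hunion := nstat_unionF hA hAm hga hgm le_rfl hg0
  have hcross : ∑ i ∈ range (A 0), conj A i * conj g i + nstat (conj g) = m * psize g :=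
    sum_mul_conj_add_nstat_conj hga hgm hg0 fun i hi => by
      have := le_psize hgN 0
      rw [conj_addF_delta hfa hfN (by omega)]
      omega
  rw [hunion, nstat_addF hfm hδm]
  zify at hcross ⊢
  linarith

end DoubleMacdonald
end
end
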